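/- Let β : Fin K → EuclideanSpace ℂ (Fin N) be an orthonormal family, let δ > 0, and let c : Fin K → Fin M → ℝ. Let μ be the product measure on (Fin K → Fin M → ℝ) whose factors are the uniform probability measure on [−δ, δ]. Then ∫ ‖∑_{k} (∑_{m} c_{k,m} · exp(i Δ_{k,m})) • β_k‖² dμ(Δ) = ∑_{k} ( ∑_{m} c_{k,m}² + (sin δ / δ)² · ∑_{m} ∑_{i ≠ m} c_{k,m} · c_{k,i} ). -/

import Mathlib

/-!
By orthonormality of the `β k`, the received power is `∑ k, ‖a k‖²` with
`a k = ∑ m, c k m * exp (i Δ k m)`, and `‖a k‖²` depends only on the `k`-th block of phase errors.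
Expanding `‖a k‖² = ∑ m j, c k m * c k j * exp (i Δ k m) * conj (exp (i Δ k j))`, the diagonal
terms contribute `c k m ²`; for `m ≠ j` the coordinates of a product measure are independent, so
the expectation factors as `‖E exp (i Δ)‖²`, and `E exp (i Δ) = sin δ / δ` for `Δ` uniform
on `[-δ, δ]`.
-/

open Real Complex Finset MeasureTheory
open scoped ComplexConjugate

theorem Orthonormal.norm_sum_smul_sq {𝕜 E ι : Type*} [RCLike 𝕜] [NormedAddCommGroup E]
    [InnerProductSpace 𝕜 E] [Fintype ι] {v : ι → E} (hv : Orthonormal 𝕜 v) (a : ι → 𝕜) :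
    ‖∑ i, a i • v i‖ ^ 2 = ∑ i, ‖a i‖ ^ 2 := by
  rw [@norm_sq_eq_re_inner 𝕜, hv.inner_sum, map_sum]
  simp_rw [RCLike.conj_mul]
  norm_cast

open ProbabilityTheory in
theorem integral_comp_eval_mul_comp_eval {ι 𝕜 : Type*} [Fintype ι] [RCLike 𝕜] {X : ι → Type*}
    {mX : ∀ i, MeasurableSpace (X i)} {μ : (i : ι) → Measure (X i)}
    [∀ i, IsProbabilityMeasure (μ i)] {i j : ι} (hij : i ≠ j) {f : X i → 𝕜} {g : X j → 𝕜}
    (hf : AEStronglyMeasurable f (μ i)) (hg : AEStronglyMeasurable g (μ j)) :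
    ∫ x, f (x i) * g (x j) ∂Measure.pi μ = (∫ y, f y ∂μ i) * ∫ y, g y ∂μ j := by
  have hind : (fun x : ∀ i, X i => x i) ⟂ᵢ[Measure.pi μ] fun x => x j :=
    (iIndepFun_pi (X := fun _ => id) fun _ => aemeasurable_id).indepFun hij
  rw [hind.integral_fun_comp_mul_comp (measurable_pi_apply i).aemeasurable
      (measurable_pi_apply j).aemeasurable, integral_comp_eval hf, integral_comp_eval hg]
  · rwa [(measurePreserving_eval μ i).map_eq]
  · rwa [(measurePreserving_eval μ j).map_eq]

section UnitModulusPhases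

variable {ι Ω : Type*} [Fintype ι] [MeasurableSpace Ω] {ν : Measure Ω} [IsProbabilityMeasure ν]
  {Z : Ω → ℂ}

theorem integrable_norm_sum_mul_comp_eval_sq (hZ : Measurable Z) (hZ1 : ∀ ω, ‖Z ω‖ = 1)
    (c : ι → ℝ) :
    Integrable (fun x => ‖∑ m, (c m : ℂ) * Z (x m)‖ ^ 2) (Measure.pi fun _ => ν) := by
  have hmeas : Measurable fun x : ι → Ω => ∑ m, (c m : ℂ) * Z (x m) :=
    Finset.measurable_sum _ fun m _ => (hZ.comp (measurable_pi_apply m)).const_mul _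
  refine .of_bound (hmeas.norm.pow_const 2).aestronglyMeasurable ((∑ m, |c m|) ^ 2)
    (ae_of_all _ fun x => ?_)
  rw [Real.norm_of_nonneg (by positivity)]
  gcongr
  refine (norm_sum_le _ _).trans_eq (sum_congr rfl fun m _ => ?_)
  simp [hZ1]

theorem integral_comp_eval_mul_conj_comp_eval [DecidableEq ι] (hZ : Measurable Z)
    (hZ1 : ∀ ω, ‖Z ω‖ = 1) (m j : ι) :
    ∫ x, Z (x m) * conj (Z (x j)) ∂Measure.pi (fun _ => ν)
      = if m = j then 1 else ((‖∫ ω, Z ω ∂ν‖ ^ 2 : ℝ) : ℂ) := by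
  split_ifs with hmj
  · subst hmj
    simp [Complex.mul_conj', hZ1]
  · rw [integral_comp_eval_mul_comp_eval (μ := fun _ => ν) (g := fun ω => conj (Z ω)) hmj
      hZ.aestronglyMeasurable (by fun_prop), integral_conj, Complex.mul_conj']
    norm_cast

theorem integral_norm_sum_mul_comp_eval_sq [DecidableEq ι] (hZ : Measurable Z)
    (hZ1 : ∀ ω, ‖Z ω‖ = 1) (c : ι → ℝ) :
    ∫ x, ‖∑ m, (c m : ℂ) * Z (x m)‖ ^ 2 ∂Measure.pi (fun _ => ν)
      = ∑ m, c m ^ 2 + ‖∫ ω, Z ω ∂ν‖ ^ 2 * ∑ m, ∑ j ∈ univ.erase m, c m * c j := by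
  have hint (m j : ι) :
      Integrable (fun x => Z (x m) * conj (Z (x j))) (Measure.pi fun _ => ν) :=
    .of_bound (Measurable.aestronglyMeasurable <| (hZ.comp (measurable_pi_apply m)).mul
        ((Complex.continuous_conj.measurable.comp hZ).comp (measurable_pi_apply j)))
      1 (ae_of_all _ fun x => by simp [hZ1])
  apply Complex.ofReal_injective
  calc ((∫ x, ‖∑ m, (c m : ℂ) * Z (x m)‖ ^ 2 ∂Measure.pi (fun _ => ν) : ℝ) : ℂ)
      = ∫ x, ∑ m, ∑ j, (c m * c j : ℂ) * (Z (x m) * conj (Z (x j))) ∂Measure.pi (fun _ => ν) := by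
        rw [← integral_complex_ofReal]
        refine integral_congr_ae (ae_of_all _ fun x => ?_)
        push_cast
        rw [← Complex.mul_conj', map_sum, sum_mul_sum]
        simp only [map_mul, Complex.conj_ofReal]
        exact sum_congr rfl fun m _ => sum_congr rfl fun j _ => by ring
    _ = ∑ m, ∑ j, (c m * c j : ℂ) * if m = j then 1 else ((‖∫ ω, Z ω ∂ν‖ ^ 2 : ℝ) : ℂ) := by
        rw [integral_finsetSum _ fun m _ => integrable_finsetSum _ fun j _ =>
          (hint m j).const_mul _]
        simp_rw [integral_finsetSum _ fun j _ => (hint _ j).const_mul _, integral_const_mul,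
          integral_comp_eval_mul_conj_comp_eval hZ hZ1]
    _ = _ := by
        push_cast
        rw [mul_sum, ← sum_add_distrib]
        refine sum_congr rfl fun m _ => ?_
        rw [← add_sum_erase _ _ (mem_univ m), if_pos rfl, mul_sum]
        congr 1
        · ring
        · refine sum_congr rfl fun j hj => ?_
          rw [if_neg (ne_of_mem_erase hj).symm]
          ring

end UnitModulusPhases

section SymmetricUniform

variable {δ : ℝ}

theorem isProbabilityMeasure_uniform_symmIcc (hδ : 0 < δ) :
    IsProbabilityMeasure ((ENNReal.ofReal (2 * δ))⁻¹ • volume.restrict (Set.Icc (-δ) δ)) := by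
  constructor
  rw [Measure.smul_apply, Measure.restrict_apply MeasurableSet.univ, Set.univ_inter,
    Real.volume_Icc, smul_eq_mul, show δ - -δ = 2 * δ by ring,
    ENNReal.inv_mul_cancel (by simp [hδ]) ENNReal.ofReal_ne_top]

theorem integral_exp_mul_I_uniform_symmIcc (hδ : 0 < δ) :
    ∫ x, exp (x * I) ∂((ENNReal.ofReal (2 * δ))⁻¹ • volume.restrict (Set.Icc (-δ) δ))
      = (Real.sin δ / δ : ℝ) := by
  rw [integral_smul_measure, integral_Icc_eq_integral_Ioc,
    ← intervalIntegral.integral_of_le (by linarith), integral_exp_mul_I_eq_sin,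
    ENNReal.toReal_inv, ENNReal.toReal_ofReal (by linarith), Complex.real_smul]
  push_cast
  field_simp

end SymmetricUniform

/-- Multi-IRS expected receive power: with orthonormal steering vectors `β k`, fixed
cascaded-channel magnitudes `c k m`, and i.i.d. uniform phase errors `Δ k m` on
`[-δ, δ]`, the expected power decouples across surfaces, each contributing a diagonal
term plus a cross term scaled by `(sin δ / δ)²`. -/
theorem multi_irs_expected_power (K N M : ℕ)
    (β : Fin K → EuclideanSpace ℂ (Fin N)) (hβ : Orthonormal ℂ β)
    (δ : ℝ) (hδ : 0 < δ) (c : Fin K → Fin M → ℝ) :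
    (∫ Δ : Fin K → Fin M → ℝ,
        ‖∑ k, ((∑ m, (c k m : ℂ) * Complex.exp ((Δ k m : ℂ) * Complex.I)) • β k)‖ ^ 2
      ∂(Measure.pi fun _ : Fin K => Measure.pi fun _ : Fin M =>
          (ENNReal.ofReal (2 * δ))⁻¹ • volume.restrict (Set.Icc (-δ) δ)))
      = ∑ k, (∑ m, c k m ^ 2
          + (Real.sin δ / δ) ^ 2 * ∑ m, ∑ i ∈ Finset.univ.erase m, c k m * c k i) := by
  set ν : Measure ℝ := (ENNReal.ofReal (2 * δ))⁻¹ • volume.restrict (Set.Icc (-δ) δ)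
  have : IsProbabilityMeasure ν := isProbabilityMeasure_uniform_symmIcc hδ
  have hZ : Measurable fun x : ℝ => exp (x * I) := by fun_prop
  have hZ1 (x : ℝ) : ‖exp (x * I)‖ = 1 := norm_exp_ofReal_mul_I x
  have hint (k : Fin K) := integrable_norm_sum_mul_comp_eval_sq (ν := ν) hZ hZ1 (c k)
  simp_rw [hβ.norm_sum_smul_sq]
  rw [integral_finsetSum _ fun k _ =>
    integrable_comp_eval (μ := fun _ : Fin K => Measure.pi fun _ => ν) (hint k)]
  refine sum_congr rfl fun k _ => ?_
  rw [integral_comp_eval (μ := fun _ : Fin K => Measure.pi fun _ => ν)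
      (hint k).aestronglyMeasurable,
    integral_norm_sum_mul_comp_eval_sq hZ hZ1, integral_exp_mul_I_uniform_symmIcc hδ,
    Complex.norm_real, Real.norm_eq_abs, sq_abs]
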